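/- arXiv:0810.0947 — 3 statements merged into one kernel-verified Lean document; each statement's English description precedes it below -/
import Mathlib

section
/- If F has cotype q ≥ 2, then for any Banach spaces E₁,…,Eₙ, every bounded n-linear operator T : E₁×⋯×Eₙ → F is multiple (q;1,…,1)-summing: there exists C with (∑_{j₁,…,jₙ=1}^m ‖T(x_{j₁}^{(1)},…,x_{jₙ}^{(n)})‖^q)^{1/q} ≤ C‖T‖ ∏_{i=1}^n ‖(x_j^{(i)})_{j=1}^m‖_{w,1}. -/
open scoped BigOperators

/-- The weak `ℓ_p` norm of a finite family in a normed space. -/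
noncomputable def weakNorm (𝕜 : Type*) [RCLike 𝕜] {E : Type*} [NormedAddCommGroup E]
    [NormedSpace 𝕜 E] (p : ℝ) {m : ℕ} (x : Fin m → E) : ℝ :=
  sSup {s | ∃ φ : E →L[𝕜] 𝕜, ‖φ‖ ≤ 1 ∧ s = (∑ j, ‖φ (x j)‖ ^ p) ^ p⁻¹}

/-- A normed group `E` has cotype `q`: `(∑‖x_k‖^q)^{1/q}` is dominated by a constant times
the average of `‖∑ ± x_k‖` in the `L²` sense over all choices of signs. -/
def HasCotype (q : ℝ) (E : Type*) [NormedAddCommGroup E] : Prop :=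
  ∃ C > 0, ∀ (k : ℕ) (x : Fin k → E),
    (∑ i, ‖x i‖ ^ q) ^ q⁻¹ ≤
      C * (((2 : ℝ) ^ k)⁻¹ *
        ∑ ε : Fin k → Bool, ‖∑ i, (if ε i then x i else -x i)‖ ^ (2 : ℝ)) ^ (2 : ℝ)⁻¹


/-! Induction on the number of variables. With all variables but the first fixed, the cotype
inequality bounds `∑ⱼ ‖T(xⱼ, v)‖^q` by the sign average of `‖T(∑ ±xⱼ, v)‖^q`; the `L²` sign
average in the cotype inequality may be replaced by the `L^q` one because `q ≥ 2` (Jensen).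
For every choice of signs, `T(∑ ±xⱼ, ·)` is an `(n-1)`-linear map of norm at most
`‖T‖ ‖(xⱼ)‖_{w,1}`, since by Hahn–Banach `‖∑ ±xⱼ‖ ≤ ‖(xⱼ)‖_{w,1}`, and the induction hypothesis
applies to it. -/

open Finset

def signedSum {ι G : Type*} [Fintype ι] [AddCommGroup G] (x : ι → G) (ε : ι → Bool) : G :=
  ∑ i, if ε i then x i else -x i

section signedSum

variable {ι G : Type*} [Fintype ι]

lemma map_signedSum {H FG : Type*} [AddCommGroup G] [AddCommGroup H] [FunLike FG G H]
    [AddMonoidHomClass FG G H] (f : FG) (x : ι → G) (ε : ι → Bool) :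
    f (signedSum x ε) = signedSum (fun i => f (x i)) ε := by
  simp only [signedSum, map_sum, apply_ite f, map_neg]

lemma norm_signedSum_le [SeminormedAddCommGroup G] (x : ι → G) (ε : ι → Bool) :
    ‖signedSum x ε‖ ≤ ∑ i, ‖x i‖ :=
  (norm_sum_le _ _).trans_eq <| sum_congr rfl fun i _ => by split_ifs <;> simp

end signedSum

section weakNorm

variable {𝕜 E : Type*} [RCLike 𝕜] [NormedAddCommGroup E] [NormedSpace 𝕜 E] {m : ℕ}

lemma sum_norm_apply_le_weakNorm_one (x : Fin m → E) {φ : E →L[𝕜] 𝕜} (hφ : ‖φ‖ ≤ 1) :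
    ∑ j, ‖φ (x j)‖ ≤ weakNorm 𝕜 1 x := by
  refine le_csSup ⟨∑ j, ‖x j‖, ?_⟩ ⟨φ, hφ, by simp⟩
  rintro _ ⟨ψ, hψ, rfl⟩
  simp only [Real.rpow_one, inv_one]
  exact sum_le_sum fun j _ => (ψ.le_opNorm _).trans (mul_le_of_le_one_left (norm_nonneg _) hψ)

lemma weakNorm_one_nonneg (x : Fin m → E) : 0 ≤ weakNorm 𝕜 1 x := by
  simpa using sum_norm_apply_le_weakNorm_one x (φ := (0 : E →L[𝕜] 𝕜)) (by simp)

lemma norm_signedSum_le_weakNorm_one (x : Fin m → E) (ε : Fin m → Bool) :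
    ‖signedSum x ε‖ ≤ weakNorm 𝕜 1 x := by
  obtain ⟨g, hg, hgx⟩ := exists_dual_vector'' 𝕜 (signedSum x ε)
  calc ‖signedSum x ε‖ = ‖g (signedSum x ε)‖ := by simp [hgx]
    _ ≤ ∑ j, ‖g (x j)‖ := by rw [map_signedSum]; exact norm_signedSum_le _ _
    _ ≤ weakNorm 𝕜 1 x := sum_norm_apply_le_weakNorm_one x hg

end weakNorm

lemma Real.rpow_expect_le_expect_rpow {ι : Type*} {s : Finset ι} (hs : s.Nonempty) {f : ι → ℝ}
    (hf : ∀ i ∈ s, 0 ≤ f i) {p : ℝ} (hp : 1 ≤ p) : (𝔼 i ∈ s, f i) ^ p ≤ 𝔼 i ∈ s, f i ^ p := by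
  have hw : ∑ _i ∈ s, (#s : ℝ)⁻¹ = 1 := by
    rw [sum_const, nsmul_eq_mul, mul_inv_cancel₀ (by simpa using hs.ne_empty)]
  simpa only [expect_eq_sum_div_card, sum_div, inv_mul_eq_div] using
    Real.rpow_arith_mean_le_arith_mean_rpow s _ f (fun _ _ => by positivity) hw hf hp

lemma expect_signs_eq_inv_two_pow_mul_sum {k : ℕ} (g : (Fin k → Bool) → ℝ) :
    𝔼 ε, g ε = ((2 : ℝ) ^ k)⁻¹ * ∑ ε, g ε := by
  rw [Fintype.expect_eq_sum_div_card, inv_mul_eq_div]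
  simp

lemma HasCotype.exists_sum_rpow_le {q : ℝ} {F : Type*} [NormedAddCommGroup F] (hq : 2 ≤ q)
    (hF : HasCotype q F) :
    ∃ A ≥ 0, ∀ (m : ℕ) (y : Fin m → F), ∑ j, ‖y j‖ ^ q ≤ A * 𝔼 ε, ‖signedSum y ε‖ ^ q := by
  obtain ⟨C, hC, hcot⟩ := hF
  refine ⟨C ^ q, by positivity, fun m y => ?_⟩
  have hq0 : 0 < q := by linarith
  set S := ∑ j, ‖y j‖ ^ q
  set M := 𝔼 ε, ‖signedSum y ε‖ ^ (2 : ℝ)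
  have hS : 0 ≤ S := by positivity
  have hM : 0 ≤ M := expect_nonneg fun _ _ => by positivity
  have hL2_le_Lq : M ^ (q / 2) ≤ 𝔼 ε, ‖signedSum y ε‖ ^ q := by
    refine (Real.rpow_expect_le_expect_rpow univ_nonempty (fun _ _ => by positivity)
      (by linarith)).trans_eq (expect_congr rfl fun ε _ => ?_)
    rw [← Real.rpow_mul (norm_nonneg _)]
    ring_nf
  calc S = (S ^ q⁻¹) ^ q := by rw [← Real.rpow_mul hS, inv_mul_cancel₀ hq0.ne', Real.rpow_one]
    _ ≤ (C * M ^ (2 : ℝ)⁻¹) ^ q := by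
        gcongr
        have h := hcot m y
        rwa [← expect_signs_eq_inv_two_pow_mul_sum] at h
    _ = C ^ q * M ^ (q / 2) := by
        rw [Real.mul_rpow hC.le (by positivity), ← Real.rpow_mul hM]
        ring_nf
    _ ≤ C ^ q * 𝔼 ε, ‖signedSum y ε‖ ^ q := by gcongr

lemma Fintype.sum_pi_fin_succ {α M : Type*} [Fintype α] [AddCommMonoid M] {n : ℕ}
    (f : (Fin (n + 1) → α) → M) : ∑ j, f j = ∑ a, ∑ j, f (Fin.cons a j) := by
  rw [← (Fin.consEquiv fun _ => α).sum_comp, Fintype.sum_prod_type]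
  rfl

namespace ContinuousMultilinearMap

variable {𝕜 F : Type*} [RCLike 𝕜] [NormedAddCommGroup F] [NormedSpace 𝕜 F]

lemma apply_cons_eq_curryLeft {n m : ℕ} {E : Fin (n + 1) → Type*}
    [∀ i, NormedAddCommGroup (E i)] [∀ i, NormedSpace 𝕜 (E i)]
    (T : ContinuousMultilinearMap 𝕜 E F) (x : ∀ i, Fin m → E i) (a : Fin m) (j : Fin n → Fin m) :
    T (fun i => x i ((Fin.cons a j : Fin (n + 1) → Fin m) i)) =
      T.curryLeft (x 0 a) (fun i => x i.succ (j i)) := by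
  rw [curryLeft_apply]
  congr 1
  funext i
  cases i using Fin.cases <;> simp

lemma signedSum_curryLeft_apply {n m : ℕ} {E : Fin (n + 1) → Type*}
    [∀ i, NormedAddCommGroup (E i)] [∀ i, NormedSpace 𝕜 (E i)]
    (T : ContinuousMultilinearMap 𝕜 E F) (u : Fin m → E 0) (v : ∀ i : Fin n, E i.succ)
    (ε : Fin m → Bool) :
    signedSum (fun j => T.curryLeft (u j) v) ε = T.curryLeft (signedSum u ε) v :=
  (map_signedSum ((apply 𝕜 _ F v).comp T.curryLeft) u ε).symm

theorem sum_norm_rpow_le_of_cotype {A q : ℝ} (hA : 0 ≤ A) (hq : 0 ≤ q)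
    (hF : ∀ (m : ℕ) (y : Fin m → F), ∑ j, ‖y j‖ ^ q ≤ A * 𝔼 ε, ‖signedSum y ε‖ ^ q)
    {n : ℕ} {E : Fin n → Type*} [∀ i, NormedAddCommGroup (E i)] [∀ i, NormedSpace 𝕜 (E i)]
    (T : ContinuousMultilinearMap 𝕜 E F) {m : ℕ} (x : ∀ i, Fin m → E i) :
    ∑ j : Fin n → Fin m, ‖T (fun i => x i (j i))‖ ^ q ≤
      A ^ n * (‖T‖ * ∏ i, weakNorm 𝕜 1 (x i)) ^ q := by
  induction n with
  | zero =>
    rw [Fintype.sum_unique, pow_zero, one_mul]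
    gcongr
    simpa using T.le_opNorm _
  | succ n ih =>
    set x' : (Fin n → Fin m) → ∀ i : Fin n, E i.succ := fun j i => x i.succ (j i)
    set W := ∏ i : Fin n, weakNorm 𝕜 1 (x i.succ) with hW
    have hW_nonneg : 0 ≤ W := prod_nonneg fun i _ => weakNorm_one_nonneg _
    have h_first : ∀ j, ∑ a, ‖T.curryLeft (x 0 a) (x' j)‖ ^ q ≤
        A * 𝔼 ε, ‖T.curryLeft (signedSum (x 0) ε) (x' j)‖ ^ q := fun j => by
      simpa only [signedSum_curryLeft_apply] using hF m fun a => T.curryLeft (x 0 a) (x' j)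
    have h_rest : ∀ ε, ∑ j, ‖T.curryLeft (signedSum (x 0) ε) (x' j)‖ ^ q ≤
        A ^ n * (‖T‖ * weakNorm 𝕜 1 (x 0) * W) ^ q := fun ε => by
      have h_norm : ‖T.curryLeft (signedSum (x 0) ε)‖ ≤ ‖T‖ * weakNorm 𝕜 1 (x 0) :=
        (T.curryLeft.le_opNorm _).trans <| by
          rw [curryLeft_norm]
          gcongr
          exact norm_signedSum_le_weakNorm_one _ ε
      refine (ih _ _).trans ?_
      gcongr
    calc ∑ j : Fin (n + 1) → Fin m, ‖T (fun i => x i (j i))‖ ^ q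
        = ∑ j, ∑ a, ‖T.curryLeft (x 0 a) (x' j)‖ ^ q := by
          rw [Fintype.sum_pi_fin_succ, sum_comm]
          simp only [apply_cons_eq_curryLeft, x']
      _ ≤ ∑ j, A * 𝔼 ε, ‖T.curryLeft (signedSum (x 0) ε) (x' j)‖ ^ q :=
          sum_le_sum fun j _ => h_first j
      _ = A * 𝔼 ε, ∑ j, ‖T.curryLeft (signedSum (x 0) ε) (x' j)‖ ^ q := by
          rw [← mul_sum, expect_sum_comm]
      _ ≤ A * 𝔼 _ε : Fin m → Bool, A ^ n * (‖T‖ * weakNorm 𝕜 1 (x 0) * W) ^ q := by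
          gcongr with ε
          exact h_rest ε
      _ = A ^ (n + 1) * (‖T‖ * ∏ i, weakNorm 𝕜 1 (x i)) ^ q := by
          rw [expect_const univ_nonempty, Fin.prod_univ_succ, ← hW, ← mul_assoc ‖T‖]
          ring

end ContinuousMultilinearMap

theorem multiple_q_one_summing_of_cotype_general {𝕜 : Type*} [RCLike 𝕜] {n : ℕ} {E : Fin n → Type*}
    [∀ i, NormedAddCommGroup (E i)] [∀ i, NormedSpace 𝕜 (E i)]
    {F : Type*} [NormedAddCommGroup F] [NormedSpace 𝕜 F]
    (q : ℝ) (hq : 2 ≤ q) (hcot : HasCotype q F)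
    (T : ContinuousMultilinearMap 𝕜 E F) :
    ∃ C, 0 ≤ C ∧ ∀ (m : ℕ) (x : ∀ i, Fin m → E i),
      (∑ j : Fin n → Fin m, ‖T (fun i => x i (j i))‖ ^ q) ^ q⁻¹ ≤
        C * ‖T‖ * ∏ i, weakNorm 𝕜 1 (x i) := by
  obtain ⟨A, hA, hF⟩ := hcot.exists_sum_rpow_le hq
  have hq0 : 0 < q := by linarith
  refine ⟨(A ^ n) ^ q⁻¹, by positivity, fun m x => ?_⟩
  have hB : 0 ≤ ‖T‖ * ∏ i, weakNorm 𝕜 1 (x i) :=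
    mul_nonneg (norm_nonneg T) (prod_nonneg fun i _ => weakNorm_one_nonneg _)
  calc (∑ j : Fin n → Fin m, ‖T (fun i => x i (j i))‖ ^ q) ^ q⁻¹
      ≤ (A ^ n * (‖T‖ * ∏ i, weakNorm 𝕜 1 (x i)) ^ q) ^ q⁻¹ := by
        gcongr
        exact T.sum_norm_rpow_le_of_cotype hA hq0.le hF x
    _ = (A ^ n) ^ q⁻¹ * ‖T‖ * ∏ i, weakNorm 𝕜 1 (x i) := by
        rw [Real.mul_rpow (by positivity) (by positivity), Real.rpow_rpow_inv hB hq0.ne', mul_assoc]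

/-- If `F` has cotype `q ≥ 2`, then every bounded multilinear operator into `F` is
multiple `(q;1,…,1)`-summing, with constant `C‖T‖`. -/
theorem multiple_q_one_summing_of_cotype {𝕜 : Type*} [RCLike 𝕜] {n : ℕ} {E : Fin n → Type*}
    [∀ i, NormedAddCommGroup (E i)] [∀ i, NormedSpace 𝕜 (E i)] [∀ i, CompleteSpace (E i)]
    {F : Type*} [NormedAddCommGroup F] [NormedSpace 𝕜 F] [CompleteSpace F]
    (q : ℝ) (hq : 2 ≤ q) (hcot : HasCotype q F)
    (T : ContinuousMultilinearMap 𝕜 E F) :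
    ∃ C, 0 ≤ C ∧ ∀ (m : ℕ) (x : ∀ i, Fin m → E i),
      (∑ j : Fin n → Fin m, ‖T (fun i => x i (j i))‖ ^ q) ^ q⁻¹ ≤
        C * ‖T‖ * ∏ i, weakNorm 𝕜 1 (x i) :=
  multiple_q_one_summing_of_cotype_general q hq hcot T
end

section
/- Let q ≥ 2, n ≥ 2, and 1 ≤ r ≤ q. Then for all Banach spaces E₁,…,Eₙ, every bounded n-linear form T : E₁×⋯×Eₙ → 𝕂 is multiple (q;1,…,1,r)-summing, i.e. (∑_{j₁,…,jₙ}|T(x_{j₁}^{(1)},…,x_{jₙ}^{(n)})|^q)^{1/q} ≤ C‖T‖ (∏_{i=1}^{n−1}‖(x_j^{(i)})‖_{w,1}) ‖(x_j^{(n)})‖_{w,r}. -/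
open scoped BigOperators

/-!
For `q ≥ 2` and scalars `c_j`, averaging over all sign vectors `ε ∈ {±1}^m` gives
`∑ |c_j|^q ≤ (∑ |c_j|^2)^{q/2} = (𝔼_ε |∑ ε_j c_j|^2)^{q/2} ≤ 𝔼_ε |∑ ε_j c_j|^q`
(parallelogram law, then Jensen). With `c_j = T(x_j, y)` in the first variable,
`∑ ε_j c_j = T(∑ ε_j x_j, y)` and `‖∑ ε_j x_j‖ ≤ ‖(x_j)‖_{w,1}`, so the first variable is absorbed
at the cost of the factor `‖(x_j)‖_{w,1}`, leaving the forms `T(∑ ε_j x_j, ·)` in one variable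
fewer. Once only the last variable is left, `T` is a linear functional, which is
`(q; q)`-summing and hence `(q; r)`-summing for `r ≤ q`.
-/

open Finset

theorem Real.sum_rpow_le_rpow_sum {ι : Type*} (s : Finset ι) {f : ι → ℝ}
    (hf : ∀ i ∈ s, 0 ≤ f i) {p : ℝ} (hp : 1 ≤ p) :
    ∑ i ∈ s, f i ^ p ≤ (∑ i ∈ s, f i) ^ p := by
  induction s using Finset.cons_induction with
  | empty => simp [Real.zero_rpow (by positivity : p ≠ 0)]
  | cons a s ha ih =>
    rw [forall_mem_cons] at hf
    rw [sum_cons, sum_cons]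
    calc f a ^ p + ∑ i ∈ s, f i ^ p ≤ f a ^ p + (∑ i ∈ s, f i) ^ p := by gcongr; exact ih hf.2
      _ ≤ (f a + ∑ i ∈ s, f i) ^ p :=
        Real.add_rpow_le_rpow_add hf.1 (sum_nonneg hf.2) hp

theorem Real.sum_rpow_rpow_inv_le_of_le {ι : Type*} (s : Finset ι) {f : ι → ℝ}
    (hf : ∀ i ∈ s, 0 ≤ f i) {p q : ℝ} (hp : 0 < p) (hpq : p ≤ q) :
    (∑ i ∈ s, f i ^ q) ^ q⁻¹ ≤ (∑ i ∈ s, f i ^ p) ^ p⁻¹ := by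
  have hq : 0 < q := hp.trans_le hpq
  have hpow : ∀ i ∈ s, f i ^ q = (f i ^ p) ^ (q / p) := fun i hi => by
    rw [← Real.rpow_mul (hf i hi), mul_div_cancel₀ _ hp.ne']
  calc (∑ i ∈ s, f i ^ q) ^ q⁻¹ ≤ ((∑ i ∈ s, f i ^ p) ^ (q / p)) ^ q⁻¹ := by
        rw [sum_congr rfl hpow]
        gcongr
        · exact sum_nonneg fun i hi => Real.rpow_nonneg (Real.rpow_nonneg (hf i hi) p) _
        · exact Real.sum_rpow_le_rpow_sum s (fun i hi => Real.rpow_nonneg (hf i hi) p)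
            ((one_le_div hp).2 hpq)
    _ = (∑ i ∈ s, f i ^ p) ^ p⁻¹ := by
        rw [← Real.rpow_mul (sum_nonneg fun i hi => Real.rpow_nonneg (hf i hi) p)]
        congr 1
        field_simp

theorem sum_units_norm_smul_add_sq {𝕜 F : Type*} [RCLike 𝕜] [NormedAddCommGroup F]
    [InnerProductSpace 𝕜 F] (a b : F) :
    ∑ u : ℤˣ, ‖u • a + b‖ ^ 2 = 2 * (‖a‖ ^ 2 + ‖b‖ ^ 2) := by
  rw [UnitsInt.univ, sum_pair (by decide), Units.neg_smul, one_smul, neg_add_eq_sub, norm_sub_rev]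
  exact parallelogram_law_with_norm 𝕜 a b

theorem sum_norm_sum_units_smul_sq {𝕜 F : Type*} [RCLike 𝕜] [NormedAddCommGroup F]
    [InnerProductSpace 𝕜 F] {m : ℕ} (c : Fin m → F) :
    ∑ ε : Fin m → ℤˣ, ‖∑ j, ε j • c j‖ ^ 2 = 2 ^ m * ∑ j, ‖c j‖ ^ 2 := by
  induction m with
  | zero => simp
  | succ m ih =>
    rw [← (Fin.consEquiv fun _ => ℤˣ).sum_comp, Fintype.sum_prod_type, sum_comm]
    simp only [Fin.consEquiv_apply, Fin.sum_univ_succ, Fin.cons_zero, Fin.cons_succ,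
      sum_units_norm_smul_add_sq (𝕜 := 𝕜), ← mul_sum, sum_add_distrib, sum_const, card_univ,
      Fintype.card_fun, Fintype.card_units_int, Fintype.card_fin, nsmul_eq_mul, ih]
    push_cast
    ring

theorem two_pow_mul_sum_norm_rpow_le_sum_norm_sum_units_smul_rpow {𝕜 F : Type*} [RCLike 𝕜]
    [NormedAddCommGroup F] [InnerProductSpace 𝕜 F] {m : ℕ} (c : Fin m → F)
    {q : ℝ} (hq : 2 ≤ q) :
    2 ^ m * ∑ j, ‖c j‖ ^ q ≤ ∑ ε : Fin m → ℤˣ, ‖∑ j, ε j • c j‖ ^ q := by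
  have hq2 : 1 ≤ q / 2 := by linarith
  have sq_rpow : ∀ t : ℝ, 0 ≤ t → (t ^ 2) ^ (q / 2) = t ^ q := fun t ht => by
    rw [← Real.rpow_natCast_mul ht, Nat.cast_ofNat, mul_div_cancel₀ _ two_ne_zero]
  have hN : (0 : ℝ) < 2 ^ m := by positivity
  have hcard : ((univ : Finset (Fin m → ℤˣ)).card : ℝ) = 2 ^ m := by simp
  have h_lq_l2 : ∑ j, ‖c j‖ ^ q ≤ (∑ j, ‖c j‖ ^ 2) ^ (q / 2) := by
    simp only [← sq_rpow _ (norm_nonneg _)]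
    exact Real.sum_rpow_le_rpow_sum _ (fun j _ => by positivity) hq2
  have h_avg : 2 ^ m * (∑ j, ‖c j‖ ^ 2) ^ (q / 2) ≤ ∑ ε : Fin m → ℤˣ, ‖∑ j, ε j • c j‖ ^ q := by
    have h_jensen := Real.rpow_sum_le_const_mul_sum_rpow_of_nonneg (s := univ)
      (f := fun ε : Fin m → ℤˣ => ‖∑ j, ε j • c j‖ ^ 2) hq2 (fun ε _ => by positivity)
    rw [sum_norm_sum_units_smul_sq (𝕜 := 𝕜), hcard, Real.mul_rpow hN.le
      (sum_nonneg fun j _ => by positivity), Real.rpow_sub_one hN.ne'] at h_jensen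
    simp only [sq_rpow _ (norm_nonneg _)] at h_jensen
    have hP : (0 : ℝ) < (2 ^ m) ^ (q / 2) := by positivity
    rwa [div_mul_eq_mul_div, le_div_iff₀ hN, mul_assoc, mul_le_mul_iff_right₀ hP, mul_comm]
      at h_jensen
  exact (mul_le_mul_of_nonneg_left h_lq_l2 hN.le).trans h_avg

section WeakNorm

variable {𝕜 E : Type*} [RCLike 𝕜] [NormedAddCommGroup E] [NormedSpace 𝕜 E] {m : ℕ}

theorem weakNorm_nonneg (p : ℝ) (x : Fin m → E) : 0 ≤ weakNorm 𝕜 p x :=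
  Real.sSup_nonneg <| by
    rintro s ⟨φ, -, rfl⟩
    exact Real.rpow_nonneg (sum_nonneg fun j _ => Real.rpow_nonneg (norm_nonneg _) p) _

theorem rpow_sum_le_weakNorm {p : ℝ} (hp : 0 ≤ p) (x : Fin m → E) {φ : E →L[𝕜] 𝕜}
    (hφ : ‖φ‖ ≤ 1) : (∑ j, ‖φ (x j)‖ ^ p) ^ p⁻¹ ≤ weakNorm 𝕜 p x := by
  refine le_csSup ⟨(∑ j, ‖x j‖ ^ p) ^ p⁻¹, ?_⟩ ⟨φ, hφ, rfl⟩
  rintro s ⟨ψ, hψ, rfl⟩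
  gcongr with j
  exact ψ.le_of_opNorm_le hψ (x j) |>.trans_eq (one_mul _)

theorem rpow_sum_le_opNorm_mul_weakNorm {p : ℝ} (hp : 0 < p) (x : Fin m → E)
    (φ : E →L[𝕜] 𝕜) : (∑ j, ‖φ (x j)‖ ^ p) ^ p⁻¹ ≤ ‖φ‖ * weakNorm 𝕜 p x := by
  rcases eq_or_ne φ 0 with rfl | hφ0
  · simp [Real.zero_rpow hp.ne', Real.zero_rpow (inv_ne_zero hp.ne')]
  have hφ : 0 < ‖φ‖ := norm_pos_iff.2 hφ0
  have hψ : ‖(‖φ‖⁻¹ : 𝕜) • φ‖ ≤ 1 := by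
    rw [norm_smul, norm_inv, RCLike.norm_ofReal, abs_norm, inv_mul_cancel₀ hφ.ne']
  have hscale : ∀ j, ‖φ (x j)‖ ^ p = ‖φ‖ ^ p * ‖((‖φ‖⁻¹ : 𝕜) • φ) (x j)‖ ^ p := fun j => by
    rw [← Real.mul_rpow hφ.le (norm_nonneg _), FunLike.coe_smul, Pi.smul_apply, norm_smul,
      norm_inv, RCLike.norm_ofReal, abs_norm, mul_inv_cancel_left₀ hφ.ne']
  rw [sum_congr rfl fun j _ => hscale j, ← mul_sum, Real.mul_rpow (by positivity)
    (sum_nonneg fun j _ => by positivity), ← Real.rpow_mul hφ.le, mul_inv_cancel₀ hp.ne',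
    Real.rpow_one]
  gcongr
  exact rpow_sum_le_weakNorm hp.le x hψ

theorem weakNorm_le_of_le {p q : ℝ} (hp : 0 < p) (hpq : p ≤ q) (x : Fin m → E) :
    weakNorm 𝕜 q x ≤ weakNorm 𝕜 p x := by
  refine csSup_le ⟨_, 0, by simp, rfl⟩ ?_
  rintro s ⟨φ, hφ, rfl⟩
  exact (Real.sum_rpow_rpow_inv_le_of_le _ (fun j _ => norm_nonneg _) hp hpq).trans
    (rpow_sum_le_weakNorm hp.le x hφ)

theorem norm_sum_units_smul_le_weakNorm_one (ε : Fin m → ℤˣ) (x : Fin m → E) :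
    ‖∑ j, ε j • x j‖ ≤ weakNorm 𝕜 1 x := by
  obtain ⟨g, hg, hgx⟩ := exists_dual_vector'' 𝕜 (∑ j, ε j • x j)
  calc ‖∑ j, ε j • x j‖ = ‖g (∑ j, ε j • x j)‖ := by rw [hgx, RCLike.norm_ofReal, abs_norm]
    _ ≤ ∑ j, ‖g (x j)‖ := by
      simp only [map_sum, map_zsmul_unit]
      exact (norm_sum_le _ _).trans_eq (sum_congr rfl fun j _ => norm_units_zsmul _ _)
    _ ≤ weakNorm 𝕜 1 x := by
      simpa using rpow_sum_le_weakNorm zero_le_one x hg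

end WeakNorm

section Multilinear

variable {𝕜 : Type*} [RCLike 𝕜]

theorem sum_norm_rpow_le_of_fin_one {E : Fin 1 → Type*} [∀ i, NormedAddCommGroup (E i)]
    [∀ i, NormedSpace 𝕜 (E i)] {q r : ℝ} (hr : 0 < r) (hrq : r ≤ q)
    (T : ContinuousMultilinearMap 𝕜 E 𝕜) {m : ℕ} (x : ∀ i, Fin m → E i) :
    ∑ j : Fin 1 → Fin m, ‖T (fun i => x i (j i))‖ ^ q ≤ (‖T‖ * weakNorm 𝕜 r (x 0)) ^ q := by
  have hq : 0 < q := hr.trans_le hrq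
  let φ : E 0 →L[𝕜] 𝕜 :=
    (ContinuousMultilinearMap.apply 𝕜 (fun i : Fin 0 => E i.succ) 𝕜 finZeroElim).comp T.curryLeft
  have hφ_apply : ∀ v, φ v = T (Fin.cons v finZeroElim) := fun v => rfl
  have hφ : ‖φ‖ ≤ ‖T‖ := φ.opNorm_le_bound (norm_nonneg T) fun v => by
    simpa [hφ_apply] using T.le_opNorm (Fin.cons v finZeroElim)
  have hsum : ∑ j : Fin 1 → Fin m, ‖T (fun i => x i (j i))‖ ^ q = ∑ j, ‖φ (x 0 j)‖ ^ q := by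
    refine Fintype.sum_equiv (Equiv.funUnique (Fin 1) (Fin m)) _ _ fun j => ?_
    rw [hφ_apply]
    congr 3
    funext i
    rw [Fin.fin_one_eq_zero i]
    rfl
  rw [hsum, ← Real.rpow_inv_le_iff_of_pos (sum_nonneg fun j _ => by positivity)
    (mul_nonneg (norm_nonneg T) (weakNorm_nonneg r (x 0))) hq]
  calc (∑ j, ‖φ (x 0 j)‖ ^ q) ^ q⁻¹ ≤ ‖φ‖ * weakNorm 𝕜 q (x 0) :=
        rpow_sum_le_opNorm_mul_weakNorm hq (x 0) φ
    _ ≤ ‖T‖ * weakNorm 𝕜 r (x 0) := by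
        gcongr
        · exact weakNorm_nonneg q (x 0)
        · exact weakNorm_le_of_le hr hrq (x 0)

theorem sum_norm_rpow_le_of_tail {k : ℕ} {E : Fin (k + 1) → Type*}
    [∀ i, NormedAddCommGroup (E i)] [∀ i, NormedSpace 𝕜 (E i)] {q : ℝ} (hq : 2 ≤ q) {m : ℕ}
    (x : ∀ i, Fin m → E i) {B : ℝ} (hB : 0 ≤ B)
    (htail : ∀ S : ContinuousMultilinearMap 𝕜 (fun i : Fin k => E i.succ) 𝕜,
      ∑ j : Fin k → Fin m, ‖S (fun i => x i.succ (j i))‖ ^ q ≤ (‖S‖ * B) ^ q)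
    (T : ContinuousMultilinearMap 𝕜 E 𝕜) :
    ∑ j : Fin (k + 1) → Fin m, ‖T (fun i => x i (j i))‖ ^ q ≤
      (‖T‖ * (weakNorm 𝕜 1 (x 0) * B)) ^ q := by
  let c : Fin m → (Fin k → Fin m) → 𝕜 := fun j₀ j =>
    T (Fin.cons (x 0 j₀) fun i => x i.succ (j i))
  let Tε : (Fin m → ℤˣ) → ContinuousMultilinearMap 𝕜 (fun i : Fin k => E i.succ) 𝕜 :=
    fun ε => T.curryLeft (∑ j₀, ε j₀ • x 0 j₀)
  have hTε_apply : ∀ ε j, Tε ε (fun i => x i.succ (j i)) = ∑ j₀, ε j₀ • c j₀ j := fun ε j => by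
    simp [Tε, c, map_sum]
  have hTε_norm : ∀ ε, ‖Tε ε‖ ≤ ‖T‖ * weakNorm 𝕜 1 (x 0) := fun ε => by
    refine (T.curryLeft.le_opNorm _).trans ?_
    rw [ContinuousMultilinearMap.curryLeft_norm]
    gcongr
    exact norm_sum_units_smul_le_weakNorm_one ε (x 0)
  have hsplit : ∑ j : Fin (k + 1) → Fin m, ‖T (fun i => x i (j i))‖ ^ q =
      ∑ j, ∑ j₀, ‖c j₀ j‖ ^ q := by
    rw [← (Fin.consEquiv fun _ => Fin m).sum_comp, Fintype.sum_prod_type, sum_comm]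
    refine sum_congr rfl fun j _ => sum_congr rfl fun j₀ _ => ?_
    congr 3
    funext i
    exact Fin.cases rfl (fun _ => rfl) i
  have hN : (0 : ℝ) < 2 ^ m := by positivity
  rw [hsplit, ← mul_le_mul_iff_right₀ hN]
  calc 2 ^ m * ∑ j, ∑ j₀, ‖c j₀ j‖ ^ q = ∑ j, 2 ^ m * ∑ j₀, ‖c j₀ j‖ ^ q := mul_sum _ _ _
    _ ≤ ∑ j, ∑ ε : Fin m → ℤˣ, ‖∑ j₀, ε j₀ • c j₀ j‖ ^ q := by
        gcongr with j
        exact two_pow_mul_sum_norm_rpow_le_sum_norm_sum_units_smul_rpow (𝕜 := 𝕜) _ hq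
    _ = ∑ ε : Fin m → ℤˣ, ∑ j : Fin k → Fin m, ‖Tε ε (fun i => x i.succ (j i))‖ ^ q := by
        simp only [hTε_apply]
        exact sum_comm
    _ ≤ ∑ ε : Fin m → ℤˣ, (‖Tε ε‖ * B) ^ q := by
        gcongr with ε
        exact htail (Tε ε)
    _ ≤ ∑ ε : Fin m → ℤˣ, (‖T‖ * weakNorm 𝕜 1 (x 0) * B) ^ q := by
        gcongr with ε
        exact hTε_norm ε
    _ = 2 ^ m * (‖T‖ * (weakNorm 𝕜 1 (x 0) * B)) ^ q := by
        simp [mul_assoc]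

theorem sum_norm_rpow_le_prod_weakNorm {k : ℕ} {E : Fin (k + 1) → Type*}
    [∀ i, NormedAddCommGroup (E i)] [∀ i, NormedSpace 𝕜 (E i)] {q r : ℝ} (hq : 2 ≤ q)
    (hr : 0 < r) (hrq : r ≤ q) (T : ContinuousMultilinearMap 𝕜 E 𝕜) {m : ℕ}
    (x : ∀ i, Fin m → E i) :
    ∑ j : Fin (k + 1) → Fin m, ‖T (fun i => x i (j i))‖ ^ q ≤
      (‖T‖ * ∏ i, weakNorm 𝕜 (if i = Fin.last k then r else 1) (x i)) ^ q := by
  induction k with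
  | zero => simpa using sum_norm_rpow_le_of_fin_one hr hrq T x
  | succ k ih =>
    rw [Fin.prod_univ_succ, if_neg Fin.last_pos.ne]
    simp only [Fin.succ_inj, ← Fin.succ_last]
    exact sum_norm_rpow_le_of_tail hq x (prod_nonneg fun i _ => weakNorm_nonneg _ _)
      (fun S => ih S fun i => x i.succ) T

end Multilinear

theorem multiple_summing_ones_r_general {𝕜 : Type*} [RCLike 𝕜] {n : ℕ}
    {E : Fin (n + 1) → Type*}
    [∀ i, NormedAddCommGroup (E i)] [∀ i, NormedSpace 𝕜 (E i)]
    (q r : ℝ) (hq : 2 ≤ q) (hr : 1 ≤ r) (hrq : r ≤ q) :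
    ∃ C, 0 ≤ C ∧
      ∀ (T : ContinuousMultilinearMap 𝕜 E 𝕜)
        (m : ℕ) (x : ∀ i, Fin m → E i),
        (∑ j : Fin (n + 1) → Fin m, ‖T (fun i => x i (j i))‖ ^ q) ^ q⁻¹ ≤
          C * ‖T‖ * ∏ i, weakNorm 𝕜 (if i = Fin.last n then r else 1) (x i) := by
  refine ⟨1, zero_le_one, fun T m x => ?_⟩
  rw [one_mul, Real.rpow_inv_le_iff_of_pos (sum_nonneg fun j _ => by positivity)
    (mul_nonneg (norm_nonneg T) (prod_nonneg fun i _ => weakNorm_nonneg _ _)) (by linarith)]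
  exact sum_norm_rpow_le_prod_weakNorm hq (by linarith) hrq T x

/-- For `q ≥ 2`, `n + 1 ≥ 2` and `1 ≤ r ≤ q`, every bounded `(n+1)`-linear form is
multiple `(q; 1,…,1,r)`-summing. -/
theorem multiple_summing_ones_r {𝕜 : Type*} [RCLike 𝕜] {n : ℕ}
    {E : Fin (n + 1) → Type*}
    [∀ i, NormedAddCommGroup (E i)] [∀ i, NormedSpace 𝕜 (E i)] [∀ i, CompleteSpace (E i)]
    (hn : 1 ≤ n) (q r : ℝ) (hq : 2 ≤ q) (hr : 1 ≤ r) (hrq : r ≤ q) :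
    ∃ C, 0 ≤ C ∧
      ∀ (T : ContinuousMultilinearMap 𝕜 E 𝕜)
        (m : ℕ) (x : ∀ i, Fin m → E i),
        (∑ j : Fin (n + 1) → Fin m, ‖T (fun i => x i (j i))‖ ^ q) ^ q⁻¹ ≤
          C * ‖T‖ * ∏ i, weakNorm 𝕜 (if i = Fin.last n then r else 1) (x i) :=
  multiple_summing_ones_r_general q r hq hr hrq
end

section
/- For every bounded bilinear form T on ℓ₂ × ℓ₂ and every 2 ≤ r < ∞, the unit-vector coefficients satisfy (∑_{j,k=1}^m |T(e_j,e_k)|^r)^{1/r} ≤ m^{1/r} ‖T‖ for all m, and the exponent 1/r is best possible (there are bilinear forms T_m on ℓ₂^m×ℓ₂^m with ‖T_m‖ ≤ d·m^{1/2} and (∑_{j,k}|T_m(e_j,e_k)|^r)^{1/r} = m^{2/r}). -/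
/-!
Fixing the first argument of `T` gives a functional of norm at most `‖T‖`, so by Bessel's
inequality each row `(T(e_j, e_k))_k` has `ℓ₂`-norm at most `‖T‖`. Every entry is also at most
`‖T‖`, hence for `r ≥ 2` each row has `ℓ_r`-norm at most `‖T‖`, and summing `m` rows gives
the bound.

For sharpness take the `m × m` corner of a Sylvester–Hadamard matrix `H` of order
`2ⁿ ∈ [m, 2m]`. Since `Hᴴ H = 2ⁿ • 1`, the corner has bilinear norm at most `√(2ⁿ) ≤ √2 √m`,
while all `m²` entries are `±1`.
-/

open scoped Matrix
open Finset Matrix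

section CoefficientEstimate

variable {𝕜 E ι : Type*} [RCLike 𝕜] [NormedAddCommGroup E] [InnerProductSpace 𝕜 E]

theorem Finset.sum_rpow_le_of_sum_sq_le (s : Finset ι) {f : ι → ℝ} {M r : ℝ}
    (hf : ∀ i ∈ s, 0 ≤ f i) (hM : 0 ≤ M) (hsum : ∑ i ∈ s, f i ^ 2 ≤ M ^ 2) (hr : 2 ≤ r) :
    ∑ i ∈ s, f i ^ r ≤ M ^ r := by
  have hfM : ∀ i ∈ s, f i ≤ M := fun i hi =>
    (pow_le_pow_iff_left₀ (hf i hi) hM two_ne_zero).1 <|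
      (single_le_sum (fun j _ => sq_nonneg (f j)) hi).trans hsum
  have hsplit : ∀ {a : ℝ}, 0 ≤ a → a ^ r = a ^ (r - 2) * a ^ 2 := fun ha => by
    rw [← Real.rpow_natCast, ← Real.rpow_add' ha (by norm_num; linarith)]
    norm_num
  calc ∑ i ∈ s, f i ^ r = ∑ i ∈ s, f i ^ (r - 2) * f i ^ 2 :=
        sum_congr rfl fun i hi => hsplit (hf i hi)
    _ ≤ ∑ i ∈ s, M ^ (r - 2) * f i ^ 2 := sum_le_sum fun i hi =>
        mul_le_mul_of_nonneg_right (Real.rpow_le_rpow (hf i hi) (hfM i hi) (by linarith))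
          (sq_nonneg _)
    _ ≤ M ^ (r - 2) * M ^ 2 := by
        rw [← mul_sum]; exact mul_le_mul_of_nonneg_left hsum (Real.rpow_nonneg hM _)
    _ = M ^ r := (hsplit hM).symm

theorem orthonormal_lp_single : Orthonormal 𝕜 (fun n : ℕ => lp.single 2 n (1 : 𝕜)) := by
  classical
  rw [orthonormal_iff_ite]
  intro i j
  rw [lp.inner_single_left, lp.single_apply]
  split_ifs with h <;> simp [h]

/-- Bessel's inequality for the Riesz representative of `φ`. -/
theorem Orthonormal.sum_norm_apply_sq_le [CompleteSpace E] {v : ι → E} (hv : Orthonormal 𝕜 v)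
    (φ : E →L[𝕜] 𝕜) (s : Finset ι) : ∑ i ∈ s, ‖φ (v i)‖ ^ 2 ≤ ‖φ‖ ^ 2 := by
  set u := (InnerProductSpace.toDual 𝕜 E).symm φ
  calc ∑ i ∈ s, ‖φ (v i)‖ ^ 2 = ∑ i ∈ s, ‖inner 𝕜 (v i) u‖ ^ 2 := by
        simp only [u, norm_inner_symm (v _), InnerProductSpace.toDual_symm_apply]
    _ ≤ ‖u‖ ^ 2 := hv.sum_inner_products_le u
    _ = ‖φ‖ ^ 2 := by simp only [u, LinearIsometryEquiv.norm_map]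

theorem Orthonormal.sum_norm_bilinear_apply_sq_le [CompleteSpace E] {v : ι → E}
    (hv : Orthonormal 𝕜 v) (T : ContinuousMultilinearMap 𝕜 (fun _ : Fin 2 => E) 𝕜) (x : E)
    (s : Finset ι) : ∑ i ∈ s, ‖T ![x, v i]‖ ^ 2 ≤ (‖T‖ * ‖x‖) ^ 2 := by
  have hrow : ‖T.curryRight ![x]‖ ≤ ‖T‖ * ‖x‖ := by
    simpa [ContinuousMultilinearMap.curryRight_norm] using T.curryRight.le_opNorm ![x]
  calc ∑ i ∈ s, ‖T ![x, v i]‖ ^ 2 = ∑ i ∈ s, ‖T.curryRight ![x] (v i)‖ ^ 2 := by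
        simp [ContinuousMultilinearMap.curryRight_apply]
    _ ≤ ‖T.curryRight ![x]‖ ^ 2 := hv.sum_norm_apply_sq_le _ s
    _ ≤ (‖T‖ * ‖x‖) ^ 2 := pow_le_pow_left₀ (norm_nonneg _) hrow 2

theorem Orthonormal.sum_sum_norm_bilinear_apply_rpow_le [CompleteSpace E] {v : ι → E}
    (hv : Orthonormal 𝕜 v) (T : ContinuousMultilinearMap 𝕜 (fun _ : Fin 2 => E) 𝕜)
    (s t : Finset ι) {r : ℝ} (hr : 2 ≤ r) :
    (∑ j ∈ s, ∑ k ∈ t, ‖T ![v j, v k]‖ ^ r) ^ r⁻¹ ≤ (#s : ℝ) ^ r⁻¹ * ‖T‖ := by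
  have hrow : ∀ j, ∑ k ∈ t, ‖T ![v j, v k]‖ ^ r ≤ ‖T‖ ^ r := fun j =>
    t.sum_rpow_le_of_sum_sq_le (fun _ _ => norm_nonneg _) (norm_nonneg T)
      (by simpa [hv.1 j] using hv.sum_norm_bilinear_apply_sq_le T (v j) t) hr
  calc (∑ j ∈ s, ∑ k ∈ t, ‖T ![v j, v k]‖ ^ r) ^ r⁻¹ ≤ (#s * ‖T‖ ^ r) ^ r⁻¹ := by
        gcongr
        simpa using sum_le_card_nsmul s _ _ fun j _ => hrow j
    _ = (#s : ℝ) ^ r⁻¹ * ‖T‖ := by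
        rw [Real.mul_rpow (by positivity) (by positivity), Real.rpow_rpow_inv (norm_nonneg T)
          (by positivity)]

end CoefficientEstimate

section SignMatrix

variable {𝕜 : Type*} [RCLike 𝕜]

theorem star_dotProduct_self_eq_sum_norm_sq {ι : Type*} [Fintype ι] (z : ι → 𝕜) :
    star z ⬝ᵥ z = ((∑ i, ‖z i‖ ^ 2 : ℝ) : 𝕜) := by
  simp [dotProduct, RCLike.conj_mul]

theorem Matrix.sum_norm_mulVec_sq_eq {m n : Type*} [Fintype m] [Fintype n] [DecidableEq n]
    (A : Matrix m n 𝕜) {c : ℝ} (hA : Aᴴ * A = (c : 𝕜) • 1) (y : n → 𝕜) :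
    ∑ i, ‖(A *ᵥ y) i‖ ^ 2 = c * ∑ j, ‖y j‖ ^ 2 := by
  apply RCLike.ofReal_injective (K := 𝕜)
  rw [← star_dotProduct_self_eq_sum_norm_sq, RCLike.ofReal_mul,
    ← star_dotProduct_self_eq_sum_norm_sq, star_mulVec, dotProduct_mulVec, vecMul_vecMul,
    ← dotProduct_mulVec, hA, smul_mulVec, one_mulVec, dotProduct_smul, smul_eq_mul]

theorem Matrix.sum_norm_submatrix_mulVec_sq_le {l m n : Type*} [Fintype l] [Fintype m]
    [Fintype n] (A : Matrix m n 𝕜) (e : l ↪ m) (y : n → 𝕜) :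
    ∑ j, ‖(A.submatrix e id *ᵥ y) j‖ ^ 2 ≤ ∑ i, ‖(A *ᵥ y) i‖ ^ 2 := by
  classical
  calc ∑ j, ‖(A.submatrix e id *ᵥ y) j‖ ^ 2 = ∑ i ∈ univ.map e, ‖(A *ᵥ y) i‖ ^ 2 := by
        rw [sum_map]; rfl
    _ ≤ ∑ i, ‖(A *ᵥ y) i‖ ^ 2 := sum_le_univ_sum_of_nonneg fun _ => by positivity

theorem Matrix.norm_sum_sum_mul_le {m n : Type*} [Fintype m] [Fintype n] (ε : Matrix m n 𝕜) {C : ℝ}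
    (hC : 0 ≤ C) (hε : ∀ y, ∑ i, ‖(ε *ᵥ y) i‖ ^ 2 ≤ C ^ 2 * ∑ j, ‖y j‖ ^ 2)
    (x : EuclideanSpace 𝕜 m) (y : EuclideanSpace 𝕜 n) :
    ‖∑ i, ∑ j, ε i j * x i * y j‖ ≤ C * ‖x‖ * ‖y‖ := by
  have hεy : √(∑ i, ‖(ε *ᵥ y) i‖ ^ 2) ≤ C * ‖y‖ := by
    rw [EuclideanSpace.norm_eq, ← Real.sqrt_sq hC, ← Real.sqrt_mul (sq_nonneg C)]
    exact Real.sqrt_le_sqrt (hε y)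
  calc ‖∑ i, ∑ j, ε i j * x i * y j‖ = ‖∑ i, x i * (ε *ᵥ y) i‖ := by
        simp only [mulVec, dotProduct, mul_sum]
        congr 1; refine sum_congr rfl fun i _ => sum_congr rfl fun j _ => by ring
    _ ≤ ∑ i, ‖x i‖ * ‖(ε *ᵥ y) i‖ := (norm_sum_le _ _).trans_eq (by simp only [norm_mul])
    _ ≤ ‖x‖ * √(∑ i, ‖(ε *ᵥ y) i‖ ^ 2) := by
        rw [EuclideanSpace.norm_eq]; exact Real.sum_mul_le_sqrt_mul_sqrt _ _ _
    _ ≤ C * ‖x‖ * ‖y‖ := by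
        rw [mul_assoc, mul_left_comm]; exact mul_le_mul_of_nonneg_left hεy (norm_nonneg x)

/-- The Kronecker power `H₂ ⊗ ⋯ ⊗ H₂` (`n` factors) of `H₂ = !![1, 1; 1, -1]`, written out
entrywise. -/
def sylvesterHadamard (n : ℕ) : Matrix (Fin n → Bool) (Fin n → Bool) 𝕜 :=
  of fun v w => ∏ i, if v i && w i then -1 else 1

theorem sylvesterHadamard_apply_eq_one_or_neg_one {n : ℕ} (v w : Fin n → Bool) :
    sylvesterHadamard (𝕜 := 𝕜) n v w = 1 ∨ sylvesterHadamard (𝕜 := 𝕜) n v w = -1 := by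
  simp only [sylvesterHadamard, of_apply]
  refine prod_induction _ (fun x : 𝕜 => x = 1 ∨ x = -1) ?_ (Or.inl rfl) fun i _ => ?_
  · rintro a b (rfl | rfl) (rfl | rfl) <;> simp
  · split_ifs <;> simp

theorem conjTranspose_sylvesterHadamard (n : ℕ) :
    (sylvesterHadamard (𝕜 := 𝕜) n)ᴴ = sylvesterHadamard n := by
  ext v w
  have hsymm : sylvesterHadamard (𝕜 := 𝕜) n w v = sylvesterHadamard n v w := by
    simp only [sylvesterHadamard, of_apply, Bool.and_comm]
  rcases sylvesterHadamard_apply_eq_one_or_neg_one (𝕜 := 𝕜) w v with h | h <;>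
    simp [← hsymm, h]

theorem sylvesterHadamard_mul_self (n : ℕ) :
    sylvesterHadamard (𝕜 := 𝕜) n * sylvesterHadamard n = (2 ^ n : 𝕜) • 1 := by
  classical
  have hbit : ∀ a b : Bool, ∑ c : Bool, ((if a && c then -1 else 1) : 𝕜) *
      (if c && b then -1 else 1) = if a = b then 2 else 0 := by
    intro a b; cases a <;> cases b <;> norm_num
  ext v w
  calc (sylvesterHadamard n * sylvesterHadamard n : Matrix _ _ 𝕜) v w
      = ∏ i, ∑ c : Bool, ((if v i && c then -1 else 1) : 𝕜) * (if c && w i then -1 else 1) := by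
        simp only [mul_apply, sylvesterHadamard, of_apply, ← prod_mul_distrib]
        rw [Fintype.prod_sum]
    _ = ((2 ^ n : 𝕜) • (1 : Matrix (Fin n → Bool) (Fin n → Bool) 𝕜)) v w := by
        rw [Matrix.smul_apply, one_apply, smul_eq_mul, mul_ite, mul_one, mul_zero]
        simp only [hbit]
        split_ifs with h
        · simp [h]
        · obtain ⟨i, hi⟩ := Function.ne_iff.mp h
          exact prod_eq_zero (mem_univ i) (if_neg hi)

theorem exists_sign_matrix_sum_norm_mulVec_sq_le (m : ℕ) :
    ∃ ε : Matrix (Fin m) (Fin m) 𝕜, (∀ j k, ε j k = 1 ∨ ε j k = -1) ∧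
      ∀ y, ∑ j, ‖(ε *ᵥ y) j‖ ^ 2 ≤ 2 * m * ∑ k, ‖y k‖ ^ 2 := by
  rcases m.eq_zero_or_pos with rfl | hm
  · exact ⟨0, finZeroElim, fun y => by simp⟩
  set n := Nat.log 2 m + 1
  have hmn : m ≤ 2 ^ n := (Nat.lt_pow_succ_log_self one_lt_two m).le
  have hnm : 2 ^ n ≤ 2 * m := by
    rw [pow_succ, mul_comm]; exact Nat.mul_le_mul_left 2 (Nat.pow_log_le_self 2 hm.ne')
  obtain ⟨ι⟩ : Nonempty (Fin m ↪ (Fin n → Bool)) :=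
    Function.Embedding.nonempty_of_card_le (by simpa using hmn)
  set A := (sylvesterHadamard (𝕜 := 𝕜) n).submatrix id ι
  have hA : Aᴴ * A = ((2 ^ n : ℝ) : 𝕜) • 1 := by
    rw [conjTranspose_submatrix, conjTranspose_sylvesterHadamard,
      ← submatrix_mul _ _ _ _ _ Function.bijective_id, sylvesterHadamard_mul_self]
    ext j k
    simp [one_apply, ι.injective.eq_iff, map_ofNat]
  refine ⟨A.submatrix ι id, fun j k => sylvesterHadamard_apply_eq_one_or_neg_one _ _, fun y => ?_⟩
  calc ∑ j, ‖(A.submatrix ι id *ᵥ y) j‖ ^ 2 ≤ ∑ v, ‖(A *ᵥ y) v‖ ^ 2 :=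
        A.sum_norm_submatrix_mulVec_sq_le ι y
    _ = 2 ^ n * ∑ k, ‖y k‖ ^ 2 := A.sum_norm_mulVec_sq_eq hA y
    _ ≤ 2 * m * ∑ k, ‖y k‖ ^ 2 := by gcongr; exact_mod_cast hnm

end SignMatrix

/-- For every bounded bilinear form `T` on `ℓ₂ × ℓ₂` and `2 ≤ r < ∞`, the unit-vector
coefficients satisfy `(∑_{j,k<m} |T(e_j,e_k)|^r)^{1/r} ≤ m^{1/r} ‖T‖`, and the exponent
`1/r` is best possible: there are sign bilinear forms `T_m` on `ℓ₂^m × ℓ₂^m` of norm at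
most `d √m` whose coefficient `ℓ_r` sum equals `m^{2/r}`. -/
theorem bilinear_coefficients_estimate {𝕜 : Type*} [RCLike 𝕜] (r : ℝ) (hr : 2 ≤ r) :
    (∀ (T : ContinuousMultilinearMap 𝕜 (fun _ : Fin 2 => lp (fun _ : ℕ => 𝕜) 2) 𝕜)
      (m : ℕ),
      (∑ j : Fin m, ∑ k : Fin m,
          ‖T ![lp.single 2 (j : ℕ) (1 : 𝕜), lp.single 2 (k : ℕ) (1 : 𝕜)]‖ ^ r) ^ r⁻¹ ≤
        (m : ℝ) ^ r⁻¹ * ‖T‖) ∧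
    (∃ d : ℝ, 0 < d ∧ ∀ m : ℕ, ∃ ε : Fin m → Fin m → 𝕜,
      (∀ j k, ε j k = 1 ∨ ε j k = -1) ∧
      (∀ x y : EuclideanSpace 𝕜 (Fin m), ‖x‖ ≤ 1 → ‖y‖ ≤ 1 →
        ‖∑ j : Fin m, ∑ k : Fin m, ε j k * x j * y k‖ ≤ d * Real.sqrt m) ∧
      (∑ j : Fin m, ∑ k : Fin m, ‖ε j k‖ ^ r) ^ r⁻¹ = (m : ℝ) ^ (2 / r)) := by
  refine ⟨fun T m => ?_, √2, by positivity, fun m => ?_⟩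
  · simpa using (orthonormal_lp_single.comp _ Fin.val_injective).sum_sum_norm_bilinear_apply_rpow_le
      T univ univ hr
  obtain ⟨ε, hsign, hrows⟩ := exists_sign_matrix_sum_norm_mulVec_sq_le (𝕜 := 𝕜) m
  have hnorm : ∀ j k, ‖ε j k‖ = 1 := fun j k => by rcases hsign j k with h | h <;> simp [h]
  refine ⟨ε, hsign, fun x y hx hy => ?_, ?_⟩
  · have hC : (√2 * √m) ^ 2 = 2 * m := by
      rw [mul_pow, Real.sq_sqrt zero_le_two, Real.sq_sqrt m.cast_nonneg]
    calc _ ≤ √2 * √m * ‖x‖ * ‖y‖ := ε.norm_sum_sum_mul_le (by positivity) (hC ▸ hrows) x y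
      _ ≤ √2 * √m * 1 * 1 := by gcongr
      _ = √2 * √m := by ring
  · simp only [hnorm, Real.one_rpow, sum_const, card_univ, Fintype.card_fin, nsmul_eq_mul,
      mul_one]
    rw [← sq, ← Real.rpow_natCast_mul m.cast_nonneg, Nat.cast_ofNat, div_eq_mul_inv]
end
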